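/- arXiv:2107.14075 — 8 statements merged into one kernel-verified Lean document; each statement's English description precedes it below -/
import Mathlib

section
/- Let 𝓕 be an ω-closed family of subsets of ℕ. Then the binary operation · on ℤ × ℤ × 𝓕 is well defined (the third component of any product again belongs to 𝓕) and associative; hence S(𝓕) is a semigroup. -/
/-- `zshift n F = {n + k : k ∈ F}`. -/
def zshift (n : ℤ) (F : Set ℤ) : Set ℤ := {m : ℤ | ∃ k ∈ F, m = n + k}

/-- A family of subsets of `ℕ` (viewed as subsets of `ℤ`) is `ω`-closed if it consists of
sets of nonnegative integers and `F₁ ∩ (-n + F₂)` belongs to the family for all `n : ℕ`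
and all members `F₁, F₂` of the family. -/
def OmegaClosed (𝓕 : Set (Set ℤ)) : Prop :=
  (∀ F ∈ 𝓕, ∀ x ∈ F, 0 ≤ x) ∧
    ∀ n : ℕ, ∀ F₁ ∈ 𝓕, ∀ F₂ ∈ 𝓕, F₁ ∩ zshift (-(n : ℤ)) F₂ ∈ 𝓕

/-- The binary operation on triples `(i, j, F)`:
`(i₁,j₁,F₁)·(i₂,j₂,F₂) = (i₁−j₁+i₂, j₂, (j₁−i₂+F₁) ∩ F₂)` if `j₁ < i₂`;
`(i₁, j₂, F₁ ∩ F₂)` if `j₁ = i₂`; `(i₁, j₁−i₂+j₂, F₁ ∩ (i₂−j₁+F₂))` if `j₁ > i₂`. -/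
def smul3 (x y : ℤ × ℤ × Set ℤ) : ℤ × ℤ × Set ℤ :=
  if x.2.1 < y.1 then
    (x.1 - x.2.1 + y.1, y.2.1, zshift (x.2.1 - y.1) x.2.2 ∩ y.2.2)
  else if x.2.1 = y.1 then
    (x.1, y.2.1, x.2.2 ∩ y.2.2)
  else
    (x.1, x.2.1 - y.1 + y.2.1, x.2.2 ∩ zshift (y.1 - x.2.1) y.2.2)

/-- The carrier of the semigroup `S(𝓕)`: all triples whose third component lies in `𝓕`. -/
def Scar (𝓕 : Set (Set ℤ)) : Set (ℤ × ℤ × Set ℤ) := {x | x.2.2 ∈ 𝓕}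

/-
In normal form the product of `(i₁,j₁,F₁)` and `(i₂,j₂,F₂)` is
`(i₁ + (i₂ - j₁)⁺, j₂ + (j₁ - i₂)⁺, (-(i₂ - j₁)⁺ + F₁) ∩ (-(j₁ - i₂)⁺ + F₂))`, i.e. the
bicyclic product on the first two coordinates with each set translated back by the amount its own
coordinate was pushed. Since translations of `ℤ` are injective they commute with intersections,
so both bracketings of a triple product are an intersection of three translates; the outer
coordinates and the three translation amounts then agree by linear arithmetic in `max`/`min`.
-/

open Pointwise

lemma zshift_eq_vadd (n : ℤ) (F : Set ℤ) : zshift n F = n +ᵥ F := by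
  ext m
  simp only [zshift, Set.mem_ofPred_eq, Set.mem_vadd_set, vadd_eq_add]
  exact ⟨fun ⟨k, hk, hm⟩ => ⟨k, hk, hm.symm⟩, fun ⟨k, hk, hm⟩ => ⟨k, hk, hm.symm⟩⟩

lemma OmegaClosed.inter_zshift_mem {𝓕 : Set (Set ℤ)} (h : OmegaClosed 𝓕) {m : ℤ} (hm : m ≤ 0)
    {F₁ F₂ : Set ℤ} (hF₁ : F₁ ∈ 𝓕) (hF₂ : F₂ ∈ 𝓕) : F₁ ∩ zshift m F₂ ∈ 𝓕 := by
  obtain ⟨n, rfl⟩ : ∃ n : ℕ, m = -n := ⟨m.natAbs, by omega⟩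
  exact h.2 n F₁ hF₁ F₂ hF₂

lemma smul3_mem_Scar {𝓕 : Set (Set ℤ)} (h : OmegaClosed 𝓕) {x y : ℤ × ℤ × Set ℤ}
    (hx : x ∈ Scar 𝓕) (hy : y ∈ Scar 𝓕) : smul3 x y ∈ Scar 𝓕 := by
  change (smul3 x y).2.2 ∈ 𝓕
  unfold smul3
  split_ifs with hlt heq
  · rw [Set.inter_comm]
    exact h.inter_zshift_mem (by omega) hy hx
  · simpa [zshift_eq_vadd] using h.inter_zshift_mem le_rfl hx hy
  · exact h.inter_zshift_mem (by omega) hx hy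

lemma smul3_eq_max_min (x y : ℤ × ℤ × Set ℤ) :
    smul3 x y = (x.1 + max (y.1 - x.2.1) 0, y.2.1 + max (x.2.1 - y.1) 0,
      (min (x.2.1 - y.1) 0 +ᵥ x.2.2) ∩ (min (y.1 - x.2.1) 0 +ᵥ y.2.2)) := by
  unfold smul3
  split_ifs with hlt heq
  · rw [min_eq_left (by omega), min_eq_right (by omega), zero_vadd, zshift_eq_vadd]
    ext <;> simp only <;> omega
  · rw [min_eq_right (by omega), min_eq_right (by omega), zero_vadd, zero_vadd]
    ext <;> simp only <;> omega
  · rw [min_eq_right (by omega), min_eq_left (by omega), zero_vadd, zshift_eq_vadd]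
    ext <;> simp only <;> omega

theorem smul3_assoc (x y z : ℤ × ℤ × Set ℤ) :
    smul3 (smul3 x y) z = smul3 x (smul3 y z) := by
  obtain ⟨i₁, j₁, F₁⟩ := x
  obtain ⟨i₂, j₂, F₂⟩ := y
  obtain ⟨i₃, j₃, F₃⟩ := z
  simp only [smul3_eq_max_min, Set.vadd_set_inter, vadd_vadd, Set.inter_assoc, Prod.mk.injEq]
  refine ⟨by omega, by omega, ?_⟩
  rw [show min (j₂ + max (j₁ - i₂) 0 - i₃) 0 + min (j₁ - i₂) 0
        = min (j₁ - (i₂ + max (i₃ - j₂) 0)) 0 by omega,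
      show min (j₂ + max (j₁ - i₂) 0 - i₃) 0 + min (i₂ - j₁) 0
        = min (i₂ + max (i₃ - j₂) 0 - j₁) 0 + min (j₂ - i₃) 0 by omega,
      show min (i₃ - (j₂ + max (j₁ - i₂) 0)) 0
        = min (i₂ + max (i₃ - j₂) 0 - j₁) 0 + min (i₃ - j₂) 0 by omega]

/-- the operation is well defined on `S(𝓕)` (the third component of a product
again lies in `𝓕`) and associative, so `S(𝓕)` is a semigroup. -/
theorem stmt0 (𝓕 : Set (Set ℤ)) (h : OmegaClosed 𝓕) :
    (∀ x ∈ Scar 𝓕, ∀ y ∈ Scar 𝓕, smul3 x y ∈ Scar 𝓕) ∧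
    (∀ x ∈ Scar 𝓕, ∀ y ∈ Scar 𝓕, ∀ z ∈ Scar 𝓕,
      smul3 (smul3 x y) z = smul3 x (smul3 y z)) :=
  ⟨fun _ hx _ hy => smul3_mem_Scar h hx hy, fun x _ y _ z _ => smul3_assoc x y z⟩
end

section
/- Let 𝓕 be an ω-closed family of subsets of ℕ. Any two idempotents of the semigroup S(𝓕) commute: if x·x = x and y·y = y in S(𝓕), then x·y = y·x. -/
/-! An idempotent `(i, j, F)` has `j = i`: for `j < i` the first coordinate of its square is
`2i − j ≠ i`, for `j > i` the second is `2j − i ≠ j`. Two such diagonal triples commute, since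
either product shifts the set of the triple with the smaller index by the same amount and then
intersects. -/

lemma snd_eq_fst_of_smul3_self {x : ℤ × ℤ × Set ℤ} (hxx : smul3 x x = x) : x.2.1 = x.1 := by
  obtain ⟨i, j, F⟩ := x
  rcases lt_trichotomy j i with hlt | heq | hgt
  · have hfst := congrArg Prod.fst hxx
    simp only [smul3, if_pos hlt] at hfst
    omega
  · exact heq
  · have hsnd := congrArg (fun p => p.2.1) hxx
    simp only [smul3, if_neg hgt.not_gt, if_neg hgt.ne'] at hsnd
    omega

lemma smul3_diag_comm (i k : ℤ) (F G : Set ℤ) :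
    smul3 (i, i, F) (k, k, G) = smul3 (k, k, G) (i, i, F) := by
  rcases lt_trichotomy i k with h | rfl | h
  · simp [smul3, h, h.not_gt, h.ne', Set.inter_comm]
  · simp [smul3, Set.inter_comm]
  · simp [smul3, h, h.not_gt, h.ne', Set.inter_comm]

theorem stmt2_general (x y : ℤ × ℤ × Set ℤ)
    (hxx : smul3 x x = x) (hyy : smul3 y y = y) :
    smul3 x y = smul3 y x := by
  obtain ⟨i, j, F⟩ := x
  obtain ⟨k, l, G⟩ := y
  obtain rfl : j = i := snd_eq_fst_of_smul3_self hxx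
  obtain rfl : l = k := snd_eq_fst_of_smul3_self hyy
  exact smul3_diag_comm _ _ F G

/-- idempotents of `S(𝓕)` commute. -/
theorem stmt2 (𝓕 : Set (Set ℤ)) (h : OmegaClosed 𝓕) (x y : ℤ × ℤ × Set ℤ)
    (hx : x ∈ Scar 𝓕) (hy : y ∈ Scar 𝓕)
    (hxx : smul3 x x = x) (hyy : smul3 y y = y) :
    smul3 x y = smul3 y x :=
  stmt2_general x y hxx hyy
end

section
/- Let 𝓕 be an ω-closed family of subsets of ℕ. Then S(𝓕) is an inverse semigroup: for every x ∈ S(𝓕) there exists a unique y ∈ S(𝓕) such that x·y·x = x and y·x·y = y; moreover, for x = (i,j,F) this unique inverse is y = (j,i,F). -/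
lemma smul3_fst (x y : ℤ × ℤ × Set ℤ) :
    (smul3 x y).1 = x.1 + max x.2.1 y.1 - x.2.1 := by
  unfold smul3; split_ifs <;> dsimp only <;> omega

lemma smul3_snd (x y : ℤ × ℤ × Set ℤ) :
    (smul3 x y).2.1 = y.2.1 + max x.2.1 y.1 - y.1 := by
  unfold smul3; split_ifs <;> dsimp only <;> omega

lemma smul3_smul3_swap (i j : ℤ) (F G : Set ℤ) :
    smul3 (smul3 (i, j, F) (j, i, G)) (i, j, F) = (i, j, F ∩ G ∩ F) := by
  simp [smul3]

lemma smul3_smul3_swap_self (i j : ℤ) (F : Set ℤ) :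
    smul3 (smul3 (i, j, F) (j, i, F)) (i, j, F) = (i, j, F) := by
  simp [smul3_smul3_swap]

/-- Multiplication never decreases the first index on the left nor the second on the right,
so `x·y·x = x` and `y·x·y = y` pin the indices of `y` down. -/
lemma indices_eq_swap_of_smul3_inverse {x y : ℤ × ℤ × Set ℤ}
    (hx : smul3 (smul3 x y) x = x) (hy : smul3 (smul3 y x) y = y) :
    y.1 = x.2.1 ∧ y.2.1 = x.1 := by
  have e₁ := congrArg Prod.fst hx
  have e₂ := congrArg (fun p : ℤ × ℤ × Set ℤ => p.2.1) hx
  have e₃ := congrArg Prod.fst hy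
  have e₄ := congrArg (fun p : ℤ × ℤ × Set ℤ => p.2.1) hy
  simp only [smul3_fst, smul3_snd] at e₁ e₂ e₃ e₄
  omega

lemma eq_swap_of_smul3_inverse {x y : ℤ × ℤ × Set ℤ}
    (hx : smul3 (smul3 x y) x = x) (hy : smul3 (smul3 y x) y = y) :
    y = (x.2.1, x.1, x.2.2) := by
  obtain ⟨i, j, F⟩ := x
  obtain ⟨a, b, G⟩ := y
  obtain ⟨rfl, rfl⟩ := indices_eq_swap_of_smul3_inverse hx hy
  rw [smul3_smul3_swap] at hx hy
  have hFG : F ⊆ G := by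
    simpa [Set.inter_right_comm F G F, Set.inter_eq_left] using congrArg (·.2.2) hx
  have hGF : G ⊆ F := by
    simpa [Set.inter_right_comm G F G, Set.inter_eq_left] using congrArg (·.2.2) hy
  rw [hGF.antisymm hFG]

theorem stmt4_general (𝓕 : Set (Set ℤ)) :
    (∀ x ∈ Scar 𝓕, ∃! y : ℤ × ℤ × Set ℤ, y ∈ Scar 𝓕 ∧
      smul3 (smul3 x y) x = x ∧ smul3 (smul3 y x) y = y) ∧
    (∀ i j : ℤ, ∀ F ∈ 𝓕, ((j, i, F) : ℤ × ℤ × Set ℤ) ∈ Scar 𝓕 ∧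
      smul3 (smul3 (i, j, F) (j, i, F)) (i, j, F) = (i, j, F) ∧
      smul3 (smul3 (j, i, F) (i, j, F)) (j, i, F) = (j, i, F)) := by
  refine ⟨?_, fun i j F hF => ⟨hF, smul3_smul3_swap_self i j F, smul3_smul3_swap_self j i F⟩⟩
  rintro ⟨i, j, F⟩ hF
  exact ⟨(j, i, F), ⟨hF, smul3_smul3_swap_self i j F, smul3_smul3_swap_self j i F⟩,
    fun y ⟨_, hx, hy⟩ => eq_swap_of_smul3_inverse hx hy⟩

/-- `S(𝓕)` is an inverse semigroup: each `x ∈ S(𝓕)` has a unique inverse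
`y ∈ S(𝓕)` with `x·y·x = x` and `y·x·y = y`; moreover the inverse of `(i,j,F)` is `(j,i,F)`. -/
theorem stmt4 (𝓕 : Set (Set ℤ)) (h : OmegaClosed 𝓕) :
    (∀ x ∈ Scar 𝓕, ∃! y : ℤ × ℤ × Set ℤ, y ∈ Scar 𝓕 ∧
      smul3 (smul3 x y) x = x ∧ smul3 (smul3 y x) y = y) ∧
    (∀ i j : ℤ, ∀ F ∈ 𝓕, ((j, i, F) : ℤ × ℤ × Set ℤ) ∈ Scar 𝓕 ∧
      smul3 (smul3 (i, j, F) (j, i, F)) (i, j, F) = (i, j, F) ∧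
      smul3 (smul3 (j, i, F) (i, j, F)) (j, i, F) = (j, i, F)) :=
  stmt4_general 𝓕
end

section
/- Let 𝓕 be an ω-closed family of subsets of ℕ and let (i₁,j₁,F₁), (i₂,j₂,F₂) ∈ S(𝓕) with F₁ and F₂ nonempty. Then there exists an idempotent e ∈ S(𝓕) with (i₁,j₁,F₁) = (i₂,j₂,F₂)·e (i.e. (i₁,j₁,F₁) ≼ (i₂,j₂,F₂) in the natural partial order of the inverse semigroup S(𝓕)) if and only if there exists k ∈ ℕ such that i₁ − i₂ = k, j₁ − j₂ = k, and F₁ ⊆ −k + F₂. -/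
/-! The idempotents of `S(𝓕)` are exactly the triples `(b, b, E)`, and right multiplication of
`(i, j, F)` by such an idempotent either shifts both indices by `b - j ≥ 0` (when `j ≤ b`) or
keeps them (when `b < j`), in both cases cutting the shifted `F` down to a subset. -/

@[simp]
lemma zshift_zero (F : Set ℤ) : zshift 0 F = F := by
  ext m; simp [zshift]

lemma smul3_self_eq_self_iff (e : ℤ × ℤ × Set ℤ) : smul3 e e = e ↔ e.1 = e.2.1 := by
  obtain ⟨a, b, E⟩ := e
  rcases lt_trichotomy b a with hlt | rfl | hgt
  · simp only [smul3, hlt, ↓reduceIte, Prod.mk.injEq, add_eq_right, Set.inter_eq_right, true_and]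
    omega
  · simp [smul3]
  · simp only [smul3, hgt.not_gt, ↓reduceIte, hgt.ne', Prod.mk.injEq, add_eq_right,
      Set.inter_eq_left, true_and]
    omega

lemma smul3_diag_of_le {i j b : ℤ} (F E : Set ℤ) (h : j ≤ b) :
    smul3 (i, j, F) (b, b, E) = (i - j + b, b, zshift (j - b) F ∩ E) := by
  rcases h.lt_or_eq with hlt | rfl
  · simp [smul3, hlt]
  · simp [smul3]

lemma smul3_diag_of_lt {i j b : ℤ} (F E : Set ℤ) (h : b < j) :
    smul3 (i, j, F) (b, b, E) = (i, j, F ∩ zshift (b - j) E) := by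
  simp [smul3, h.not_gt, h.ne']

theorem stmt5_general (𝓕 : Set (Set ℤ)) (i₁ j₁ i₂ j₂ : ℤ) (F₁ F₂ : Set ℤ)
    (hF₁ : F₁ ∈ 𝓕) :
    (∃ e ∈ Scar 𝓕, smul3 e e = e ∧ (i₁, j₁, F₁) = smul3 (i₂, j₂, F₂) e) ↔
      ∃ k : ℕ, i₁ - i₂ = (k : ℤ) ∧ j₁ - j₂ = (k : ℤ) ∧ F₁ ⊆ zshift (-(k : ℤ)) F₂ := by
  constructor
  · rintro ⟨⟨b, a, E⟩, -, hidem, heq⟩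
    have hba : b = a := (smul3_self_eq_self_iff _).1 hidem
    subst hba
    rcases le_or_gt j₂ b with hle | hlt
    · rw [smul3_diag_of_le _ _ hle, Prod.mk.injEq, Prod.mk.injEq] at heq
      obtain ⟨rfl, rfl, rfl⟩ := heq
      refine ⟨(j₁ - j₂).toNat, by omega, by omega, ?_⟩
      rw [show -((j₁ - j₂).toNat : ℤ) = j₂ - j₁ by omega]
      exact Set.inter_subset_left
    · rw [smul3_diag_of_lt _ _ hlt, Prod.mk.injEq, Prod.mk.injEq] at heq
      obtain ⟨rfl, rfl, rfl⟩ := heq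
      exact ⟨0, by simp, by simp, by simp [Set.inter_subset_left]⟩
  · rintro ⟨k, hi, hj, hF⟩
    refine ⟨(j₁, j₁, F₁), hF₁, (smul3_self_eq_self_iff _).2 rfl, ?_⟩
    rw [smul3_diag_of_le _ _ (by omega), show j₂ - j₁ = -(k : ℤ) by omega,
      Set.inter_eq_right.2 hF, show i₂ - j₂ + j₁ = i₁ by omega]

/-- description of the natural partial order on `S(𝓕)` for elements with
nonempty third components. -/
theorem stmt5 (𝓕 : Set (Set ℤ)) (h : OmegaClosed 𝓕) (i₁ j₁ i₂ j₂ : ℤ) (F₁ F₂ : Set ℤ)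
    (hF₁ : F₁ ∈ 𝓕) (hF₂ : F₂ ∈ 𝓕) (hne₁ : F₁.Nonempty) (hne₂ : F₂.Nonempty) :
    (∃ e ∈ Scar 𝓕, smul3 e e = e ∧ (i₁, j₁, F₁) = smul3 (i₂, j₂, F₂) e) ↔
      ∃ k : ℕ, i₁ - i₂ = (k : ℤ) ∧ j₁ - j₂ = (k : ℤ) ∧ F₁ ⊆ zshift (-(k : ℤ)) F₂ :=
  stmt5_general 𝓕 i₁ j₁ i₂ j₂ F₁ F₂ hF₁
end

section
/- Let 𝓕 be an ω-closed family of subsets of ℕ and let x = (i₁,j₁,F₁), y = (i₂,j₂,F₂) ∈ S(𝓕). Then: (a) x and y generate the same principal right ideal of S(𝓕), i.e. {x} ∪ x·S(𝓕) = {y} ∪ y·S(𝓕), if and only if i₁ = i₂ and F₁ = F₂; (b) x and y generate the same principal left ideal of S(𝓕), i.e. {x} ∪ S(𝓕)·x = {y} ∪ S(𝓕)·y, if and only if j₁ = j₂ and F₁ = F₂. -/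
/-- The principal right ideal of `x` in `S(𝓕)`: `{x} ∪ x·S(𝓕)`. -/
def rIdeal (𝓕 : Set (Set ℤ)) (x : ℤ × ℤ × Set ℤ) : Set (ℤ × ℤ × Set ℤ) :=
  {x} ∪ smul3 x '' Scar 𝓕

/-- The principal left ideal of `x` in `S(𝓕)`: `{x} ∪ S(𝓕)·x`. -/
def lIdeal (𝓕 : Set (Set ℤ)) (x : ℤ × ℤ × Set ℤ) : Set (ℤ × ℤ × Set ℤ) :=
  {x} ∪ (fun s => smul3 s x) '' Scar 𝓕

lemma le_fst_and_subset_of_mem_rIdeal {𝓕 : Set (Set ℤ)} {x p : ℤ × ℤ × Set ℤ}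
    (hp : p ∈ rIdeal 𝓕 x) : x.1 ≤ p.1 ∧ p.2.2 ⊆ zshift (x.1 - p.1) x.2.2 := by
  rcases hp with rfl | ⟨y, -, rfl⟩
  · simp
  unfold smul3
  split_ifs
  · refine ⟨by omega, ?_⟩
    rw [show x.1 - (x.1 - x.2.1 + y.1) = x.2.1 - y.1 by ring]
    exact Set.inter_subset_left
  all_goals simp

lemma smul3_shift_middle (i j₁ j₂ a b : ℤ) (F G : Set ℤ) :
    smul3 (i, j₂, F) (a - j₁ + j₂, b, G) = smul3 (i, j₁, F) (a, b, G) := by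
  unfold smul3
  dsimp only
  split_ifs <;> first | omega | refine Prod.ext ?_ (Prod.ext ?_ ?_)
  all_goals dsimp only
  all_goals first | omega | rfl | (congr 2; omega)

lemma rIdeal_subset_rIdeal {𝓕 : Set (Set ℤ)} {F : Set ℤ} (hF : F ∈ 𝓕) (i j₁ j₂ : ℤ) :
    rIdeal 𝓕 (i, j₁, F) ⊆ rIdeal 𝓕 (i, j₂, F) := by
  rintro p (rfl | ⟨⟨a, b, G⟩, hG, rfl⟩)
  · exact Or.inr ⟨(j₂, j₁, F), hF, by simp [smul3]⟩
  · exact Or.inr ⟨(a - j₁ + j₂, b, G), hG, smul3_shift_middle i j₁ j₂ a b F G⟩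

theorem rIdeal_eq_rIdeal_iff {𝓕 : Set (Set ℤ)} {i₁ j₁ i₂ j₂ : ℤ} {F₁ F₂ : Set ℤ}
    (hF₁ : F₁ ∈ 𝓕) :
    rIdeal 𝓕 (i₁, j₁, F₁) = rIdeal 𝓕 (i₂, j₂, F₂) ↔ i₁ = i₂ ∧ F₁ = F₂ := by
  constructor
  · intro h
    have h₂ : (i₂, j₂, F₂) ∈ rIdeal 𝓕 (i₁, j₁, F₁) := h ▸ Or.inl rfl
    have h₁ : (i₁, j₁, F₁) ∈ rIdeal 𝓕 (i₂, j₂, F₂) := h ▸ Or.inl rfl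
    obtain ⟨hi₁₂, hF₂₁⟩ := le_fst_and_subset_of_mem_rIdeal h₂
    obtain ⟨hi₂₁, hF₁₂⟩ := le_fst_and_subset_of_mem_rIdeal h₁
    obtain rfl : i₁ = i₂ := le_antisymm hi₁₂ hi₂₁
    simp only [sub_self, zshift_zero] at hF₂₁ hF₁₂
    exact ⟨rfl, hF₁₂.antisymm hF₂₁⟩
  · rintro ⟨rfl, rfl⟩
    exact (rIdeal_subset_rIdeal hF₁ i₁ j₁ j₂).antisymm (rIdeal_subset_rIdeal hF₁ i₁ j₂ j₁)

def swapIdx (x : ℤ × ℤ × Set ℤ) : ℤ × ℤ × Set ℤ := (x.2.1, x.1, x.2.2)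

lemma swapIdx_swapIdx (x : ℤ × ℤ × Set ℤ) : swapIdx (swapIdx x) = x := rfl

lemma smul3_swapIdx (x y : ℤ × ℤ × Set ℤ) :
    smul3 (swapIdx y) (swapIdx x) = swapIdx (smul3 x y) := by
  unfold smul3 swapIdx
  dsimp only
  split_ifs <;> first | omega | refine Prod.ext ?_ (Prod.ext ?_ ?_)
  all_goals dsimp only
  all_goals first | omega | rfl | exact Set.inter_comm _ _

lemma image_swapIdx_Scar (𝓕 : Set (Set ℤ)) : swapIdx '' Scar 𝓕 = Scar 𝓕 :=
  Set.ext fun t => ⟨by rintro ⟨s, hs, rfl⟩; exact hs, fun ht => ⟨swapIdx t, ht, rfl⟩⟩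

lemma lIdeal_eq_image_rIdeal (𝓕 : Set (Set ℤ)) (x : ℤ × ℤ × Set ℤ) :
    lIdeal 𝓕 x = swapIdx '' rIdeal 𝓕 (swapIdx x) := by
  rw [rIdeal, Set.image_union, Set.image_singleton, swapIdx_swapIdx, Set.image_image]
  simp only [← smul3_swapIdx, swapIdx_swapIdx]
  rw [← Set.image_image (fun s => smul3 s x), image_swapIdx_Scar, lIdeal]

theorem lIdeal_eq_lIdeal_iff {𝓕 : Set (Set ℤ)} {i₁ j₁ i₂ j₂ : ℤ} {F₁ F₂ : Set ℤ}
    (hF₁ : F₁ ∈ 𝓕) :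
    lIdeal 𝓕 (i₁, j₁, F₁) = lIdeal 𝓕 (i₂, j₂, F₂) ↔ j₁ = j₂ ∧ F₁ = F₂ := by
  rw [lIdeal_eq_image_rIdeal, lIdeal_eq_image_rIdeal,
    (Function.Involutive.injective swapIdx_swapIdx).image_injective.eq_iff]
  exact rIdeal_eq_rIdeal_iff hF₁

theorem stmt6_general (𝓕 : Set (Set ℤ)) (i₁ j₁ i₂ j₂ : ℤ) (F₁ F₂ : Set ℤ)
    (hF₁ : F₁ ∈ 𝓕) :
    (rIdeal 𝓕 (i₁, j₁, F₁) = rIdeal 𝓕 (i₂, j₂, F₂) ↔ i₁ = i₂ ∧ F₁ = F₂) ∧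
    (lIdeal 𝓕 (i₁, j₁, F₁) = lIdeal 𝓕 (i₂, j₂, F₂) ↔ j₁ = j₂ ∧ F₁ = F₂) :=
  ⟨rIdeal_eq_rIdeal_iff hF₁, lIdeal_eq_lIdeal_iff hF₁⟩

/-- description of Green's relations `ℛ` and `ℒ` on `S(𝓕)`. -/
theorem stmt6 (𝓕 : Set (Set ℤ)) (h : OmegaClosed 𝓕) (i₁ j₁ i₂ j₂ : ℤ) (F₁ F₂ : Set ℤ)
    (hF₁ : F₁ ∈ 𝓕) (hF₂ : F₂ ∈ 𝓕) :
    (rIdeal 𝓕 (i₁, j₁, F₁) = rIdeal 𝓕 (i₂, j₂, F₂) ↔ i₁ = i₂ ∧ F₁ = F₂) ∧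
    (lIdeal 𝓕 (i₁, j₁, F₁) = lIdeal 𝓕 (i₂, j₂, F₂) ↔ j₁ = j₂ ∧ F₁ = F₂) :=
  stmt6_general 𝓕 i₁ j₁ i₂ j₂ F₁ F₂ hF₁
end

section
/- Let 𝓕 be an ω-closed family of subsets of ℕ. The semigroup S(𝓕) is combinatorial: if x, y ∈ S(𝓕) satisfy both {x} ∪ x·S(𝓕) = {y} ∪ y·S(𝓕) and {x} ∪ S(𝓕)·x = {y} ∪ S(𝓕)·y (i.e. x and y are ℋ-equivalent), then x = y; so all ℋ-classes of S(𝓕) are singletons. -/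
/-!
Multiplying on the right never decreases the first coordinate, and when it leaves it unchanged
the third coordinate can only shrink; multiplying on the left never decreases the second
coordinate. So two elements generating the same principal right ideal share their first and
third coordinates, and two generating the same principal left ideal share their second.
-/

lemma fst_le_fst_smul3 (x s : ℤ × ℤ × Set ℤ) : x.1 ≤ (smul3 x s).1 := by
  unfold smul3; split_ifs <;> simp only <;> omega

lemma snd_le_snd_smul3 (s x : ℤ × ℤ × Set ℤ) : x.2.1 ≤ (smul3 s x).2.1 := by
  unfold smul3; split_ifs <;> simp only <;> omega

lemma thd_smul3_subset_of_fst_eq {x s : ℤ × ℤ × Set ℤ} (he : (smul3 x s).1 = x.1) :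
    (smul3 x s).2.2 ⊆ x.2.2 := by
  unfold smul3 at *
  split_ifs at * with hlt
  · simp only at he; omega
  all_goals exact Set.inter_subset_left

section Ideals

variable {𝓕 : Set (Set ℤ)} {x y : ℤ × ℤ × Set ℤ}

lemma mem_rIdeal_self : x ∈ rIdeal 𝓕 x := Set.mem_union_left _ rfl

lemma mem_lIdeal_self : x ∈ lIdeal 𝓕 x := Set.mem_union_left _ rfl

lemma fst_le_of_mem_rIdeal (hy : y ∈ rIdeal 𝓕 x) : x.1 ≤ y.1 := by
  rcases hy with rfl | ⟨s, -, rfl⟩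
  · exact le_rfl
  · exact fst_le_fst_smul3 x s

lemma thd_subset_of_mem_rIdeal (hy : y ∈ rIdeal 𝓕 x) (he : y.1 = x.1) : y.2.2 ⊆ x.2.2 := by
  rcases hy with rfl | ⟨s, -, rfl⟩
  · exact subset_rfl
  · exact thd_smul3_subset_of_fst_eq he

lemma snd_le_of_mem_lIdeal (hy : y ∈ lIdeal 𝓕 x) : x.2.1 ≤ y.2.1 := by
  rcases hy with rfl | ⟨s, -, rfl⟩
  · exact le_rfl
  · exact snd_le_snd_smul3 s x

end Ideals

theorem stmt7_general (𝓕 : Set (Set ℤ)) (x y : ℤ × ℤ × Set ℤ)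
    (hR : rIdeal 𝓕 x = rIdeal 𝓕 y) (hL : lIdeal 𝓕 x = lIdeal 𝓕 y) :
    x = y := by
  have hyxR : y ∈ rIdeal 𝓕 x := hR ▸ mem_rIdeal_self
  have hxyR : x ∈ rIdeal 𝓕 y := hR ▸ mem_rIdeal_self
  have hfst : x.1 = y.1 := le_antisymm (fst_le_of_mem_rIdeal hyxR) (fst_le_of_mem_rIdeal hxyR)
  have hsnd : x.2.1 = y.2.1 := by
    have hyxL : y ∈ lIdeal 𝓕 x := hL ▸ mem_lIdeal_self
    have hxyL : x ∈ lIdeal 𝓕 y := hL ▸ mem_lIdeal_self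
    exact le_antisymm (snd_le_of_mem_lIdeal hyxL) (snd_le_of_mem_lIdeal hxyL)
  have hthd : x.2.2 = y.2.2 :=
    (thd_subset_of_mem_rIdeal hxyR hfst).antisymm (thd_subset_of_mem_rIdeal hyxR hfst.symm)
  exact Prod.ext hfst (Prod.ext hsnd hthd)

/-- `S(𝓕)` is combinatorial: `ℋ`-equivalent elements are equal. -/
theorem stmt7 (𝓕 : Set (Set ℤ)) (h : OmegaClosed 𝓕) (x y : ℤ × ℤ × Set ℤ)
    (hx : x ∈ Scar 𝓕) (hy : y ∈ Scar 𝓕)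
    (hR : rIdeal 𝓕 x = rIdeal 𝓕 y) (hL : lIdeal 𝓕 x = lIdeal 𝓕 y) :
    x = y :=
  stmt7_general 𝓕 x y hR hL
end

section
/- Let 𝓕 be an ω-closed family of subsets of ℕ with ∅ ∉ 𝓕. Then S(𝓕) is an E-unitary inverse semigroup: if e, f, s ∈ S(𝓕), e and f are idempotents, and e = s·f, then s is an idempotent. -/
/-! The index difference `i - j` is a homomorphism from `smul3` to `(ℤ, +)`, and its kernel is
exactly the set of idempotents `(i, i, F)`. Hence `e = s·f` with `e`, `f` idempotent forces `s`
into the kernel. -/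

def indexDiff (x : ℤ × ℤ × Set ℤ) : ℤ := x.1 - x.2.1

theorem indexDiff_smul3 (x y : ℤ × ℤ × Set ℤ) :
    indexDiff (smul3 x y) = indexDiff x + indexDiff y := by
  unfold indexDiff smul3
  split_ifs <;> dsimp only <;> omega

theorem smul3_self_eq_self_iff_s12 (x : ℤ × ℤ × Set ℤ) : smul3 x x = x ↔ indexDiff x = 0 := by
  constructor
  · intro hx
    have hdiff := congrArg indexDiff hx
    rw [indexDiff_smul3] at hdiff
    omega
  · obtain ⟨i, j, F⟩ := x
    intro hx
    obtain rfl : i = j := by unfold indexDiff at hx; dsimp only at hx; omega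
    simp [smul3]

theorem stmt12_general
    (e f s : ℤ × ℤ × Set ℤ)
    (hee : smul3 e e = e) (hff : smul3 f f = f) (hef : e = smul3 s f) :
    smul3 s s = s := by
  rw [smul3_self_eq_self_iff_s12] at hee hff ⊢
  have hdiff := congrArg indexDiff hef
  rw [indexDiff_smul3] at hdiff
  omega

/-- if `∅ ∉ 𝓕` then `S(𝓕)` is `E`-unitary: any element lying above an
idempotent in the natural partial order is itself an idempotent. -/
theorem stmt12 (𝓕 : Set (Set ℤ)) (h : OmegaClosed 𝓕) (hempty : (∅ : Set ℤ) ∉ 𝓕)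
    (e f s : ℤ × ℤ × Set ℤ) (he : e ∈ Scar 𝓕) (hf : f ∈ Scar 𝓕) (hs : s ∈ Scar 𝓕)
    (hee : smul3 e e = e) (hff : smul3 f f = f) (hef : e = smul3 s f) :
    smul3 s s = s :=
  stmt12_general e f s hee hff hef
end

section
/- Let 𝓕 be a nonempty ω-closed family of subsets of ℕ and let B(𝓕) denote the Rees quotient of S(𝓕) by the congruence that identifies x and y whenever x = y or the third components of both x and y equal ∅ (so B(𝓕) = S(𝓕) when ∅ ∉ 𝓕). Then B(𝓕) has an identity element (an element e with e·x = x·e = x for all x) if and only if 𝓕 = {∅}. -/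
/-- The congruence on `S(𝓕)` identifying `x` and `y` iff `x = y` or both third
components are empty (the Rees congruence by the ideal of `∅`-triples). -/
def reesEq (x y : ℤ × ℤ × Set ℤ) : Prop :=
  x = y ∨ (x.2.2 = (∅ : Set ℤ) ∧ y.2.2 = (∅ : Set ℤ))

/-!
A two-sided identity `e` of `B(𝓕)` fails already on the left-hand factor
`x = (e.1 - 1, e.1 - 1, G)`: since `x.2.1 < e.1`, the product `x · e` has first coordinate `e.1`,
so `x · e ≠ x` and the Rees congruence can identify them only when `G = ∅`.
Conversely, if `𝓕 = {∅}` every product is an `∅`-triple, so any element is an identity.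
-/

@[simp]
lemma zshift_empty (n : ℤ) : zshift n ∅ = ∅ := by
  simp [zshift]

lemma smul3_fst_of_lt {x y : ℤ × ℤ × Set ℤ} (h : x.2.1 < y.1) :
    (smul3 x y).1 = x.1 - x.2.1 + y.1 := by
  simp only [smul3, if_pos h]

lemma smul3_thd_eq_empty {x y : ℤ × ℤ × Set ℤ} (h : x.2.2 = ∅ ∨ y.2.2 = ∅) :
    (smul3 x y).2.2 = ∅ := by
  unfold smul3
  rcases h with h | h <;> split_ifs <;> simp [h]

lemma eq_empty_of_reesEq_smul3 {e : ℤ × ℤ × Set ℤ} {G : Set ℤ}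
    (h : reesEq (smul3 (e.1 - 1, e.1 - 1, G) e) (e.1 - 1, e.1 - 1, G)) : G = ∅ := by
  rcases h with heq | ⟨-, hG⟩
  · have hfst := smul3_fst_of_lt (x := (e.1 - 1, e.1 - 1, G)) (y := e) (by simp)
    rw [heq] at hfst
    simp at hfst
  · exact hG

theorem stmt13_general (𝓕 : Set (Set ℤ)) (hne : 𝓕.Nonempty) :
    (∃ e ∈ Scar 𝓕, ∀ x ∈ Scar 𝓕, reesEq (smul3 e x) x ∧ reesEq (smul3 x e) x) ↔
      𝓕 = {(∅ : Set ℤ)} := by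
  constructor
  · rintro ⟨e, -, hid⟩
    refine hne.subset_singleton_iff.mp fun G hG => ?_
    exact eq_empty_of_reesEq_smul3 (hid (e.1 - 1, e.1 - 1, G) hG).2
  · rintro rfl
    refine ⟨(0, 0, ∅), rfl, fun x (hx : x.2.2 = ∅) => ⟨?_, ?_⟩⟩
    · exact Or.inr ⟨smul3_thd_eq_empty (Or.inr hx), hx⟩
    · exact Or.inr ⟨smul3_thd_eq_empty (Or.inl hx), hx⟩

/-- the Rees quotient `B(𝓕)` of `S(𝓕)` by the `∅`-triples has an identity
element iff `𝓕 = {∅}`. -/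
theorem stmt13 (𝓕 : Set (Set ℤ)) (h : OmegaClosed 𝓕) (hne : 𝓕.Nonempty) :
    (∃ e ∈ Scar 𝓕, ∀ x ∈ Scar 𝓕, reesEq (smul3 e x) x ∧ reesEq (smul3 x e) x) ↔
      𝓕 = {(∅ : Set ℤ)} :=
  stmt13_general 𝓕 hne
end
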